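/- arXiv:1606.06913 — 8 statements merged into one kernel-verified Lean document; each statement's English description precedes it below -/
import Mathlib

section
/- For a full-rank lattice Λ in ℝⁿ, if x is a uniformly random point of the torus ℝⁿ/Λ, then the probability that dist(x, Λ) ≥ μ(Λ)/2 is at least 1/2, where μ(Λ) is the covering radius and dist(x,Λ) = min over z in Λ+x of ‖z‖. -/
open MeasureTheory Real Matrix Set

/-- Euclidean norm on `Fin n → ℝ`. -/
noncomputable def enorm {n : ℕ} (x : Fin n → ℝ) : ℝ := Real.sqrt (∑ i, x i ^ 2)

/-- The lattice point of `Λ = B·ℤⁿ` corresponding to the integer vector `z`. -/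
noncomputable def latPt {n : ℕ} (B : Matrix (Fin n) (Fin n) ℝ) (z : Fin n → ℤ) : Fin n → ℝ :=
  B.mulVec fun i => (z i : ℝ)

/-- Euclidean distance from a point `x` to the lattice `B·ℤⁿ`. -/
noncomputable def distLat {n : ℕ} (B : Matrix (Fin n) (Fin n) ℝ) (x : Fin n → ℝ) : ℝ :=
  ⨅ z : Fin n → ℤ, enorm (x - latPt B z)

/-- The covering radius of the lattice `B·ℤⁿ`. -/
noncomputable def covRad {n : ℕ} (B : Matrix (Fin n) (Fin n) ℝ) : ℝ :=
  ⨆ x : Fin n → ℝ, distLat B x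

/-- A fundamental domain of `B·ℤⁿ` (parametrizing the torus `ℝⁿ/Λ`). -/
noncomputable def fundDom {n : ℕ} (B : Matrix (Fin n) (Fin n) ℝ) : Set (Fin n → ℝ) :=
  B.mulVec '' (Set.univ.pi fun _ : Fin n => Set.Ico (0 : ℝ) 1)

/-! The distance `d = dist(·, Λ)` is `Λ`-periodic and subadditive, and by periodicity and
compactness it attains its supremum `μ` at some point `t`. The reflection `x ↦ t - x` preserves
volume and carries fundamental domains of `Λ` to fundamental domains, and since
`d x + d (t - x) ≥ d t = μ` it maps `{d < μ/2}` into `{d ≥ μ/2}`. Hence the latter set takes up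
at least half of the torus. -/

section Reflection
variable {E : Type*} [AddCommGroup E] [MeasurableSpace E] [MeasurableAdd E] [MeasurableNeg E]
  {μ : Measure E} [μ.IsAddLeftInvariant] [μ.IsNegInvariant] {L : AddSubgroup E} [Countable L]
  {F : Set E}

theorem MeasureTheory.IsAddFundamentalDomain.measure_inter_preimage_sub
    (hF : IsAddFundamentalDomain L F μ) {S : Set E} (hS : MeasurableSet S)
    (hSL : ∀ l : L, (l +ᵥ ·) ⁻¹' S = S) (t : E) :
    μ (F ∩ (t - ·) ⁻¹' S) = μ (F ∩ S) := by
  have hrefl : MeasurePreserving (t - ·) μ μ := by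
    convert (measurePreserving_add_left μ t).comp (Measure.measurePreserving_neg μ) using 1
    ext x
    simp [sub_eq_add_neg]
  have hF' : IsAddFundamentalDomain L ((t - ·) ⁻¹' F) μ :=
    hF.preimage_of_equiv hrefl.quasiMeasurePreserving (Equiv.neg L).bijective fun l x => by
      change t - (-(l : E) + x) = l + (t - x)
      abel
  have hinv : (t - ·) ⁻¹' ((t - ·) ⁻¹' F) = F := by ext x; simp
  calc μ (F ∩ (t - ·) ⁻¹' S) = μ ((t - ·) ⁻¹' ((t - ·) ⁻¹' F ∩ S)) := by
        rw [preimage_inter, hinv]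
    _ = μ (S ∩ (t - ·) ⁻¹' F) := by
        rw [hrefl.measure_preimage (hF'.nullMeasurableSet.inter hS.nullMeasurableSet), inter_comm]
    _ = μ (F ∩ S) := by rw [hF'.measure_set_eq hF hS hSL, inter_comm]

theorem MeasureTheory.IsAddFundamentalDomain.measure_le_two_mul_measure_half_le
    (hF : IsAddFundamentalDomain L F μ) {f : E → ℝ} (hf : Measurable f)
    (hfL : ∀ l ∈ L, ∀ x, f (l + x) = f x) (t : E) (hft : ∀ x, f t ≤ f x + f (t - x)) :
    μ F ≤ 2 * μ {x ∈ F | f t / 2 ≤ f x} := by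
  set S := {x | f t / 2 ≤ f x}
  have hS : MeasurableSet S := hf measurableSet_Ici
  have hcover : F ⊆ {x ∈ F | f t / 2 ≤ f x} ∪ F ∩ (t - ·) ⁻¹' S := by
    intro x hx
    by_cases h : f t / 2 ≤ f x
    · exact Or.inl ⟨hx, h⟩
    · exact Or.inr ⟨hx, show f t / 2 ≤ f (t - x) by linarith [hft x]⟩
  have hSL : ∀ l : L, (l +ᵥ ·) ⁻¹' S = S := fun l => by
    ext x
    exact iff_of_eq (congrArg (f t / 2 ≤ ·) (hfL l l.2 x))
  have hrefl := hF.measure_inter_preimage_sub hS hSL t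
  calc μ F ≤ μ {x ∈ F | f t / 2 ≤ f x} + μ (F ∩ (t - ·) ⁻¹' S) :=
        (measure_mono hcover).trans (measure_union_le _ _)
    _ = 2 * μ {x ∈ F | f t / 2 ≤ f x} := by rw [hrefl, two_mul]; rfl

end Reflection

section Lattice
variable {n : ℕ} (B : Matrix (Fin n) (Fin n) ℝ)

theorem enorm_eq_norm_toLp (x : Fin n → ℝ) : _root_.enorm x = ‖WithLp.toLp 2 x‖ := by
  simp [_root_.enorm, EuclideanSpace.norm_eq, sq_abs]

theorem latPt_zero : latPt B 0 = 0 := by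
  unfold latPt
  convert B.mulVec_zero
  simp

theorem latPt_add (z w : Fin n → ℤ) : latPt B (z + w) = latPt B z + latPt B w := by
  unfold latPt
  rw [← Matrix.mulVec_add]
  congr 1
  ext
  simp

theorem distLat_le (x : Fin n → ℝ) (z : Fin n → ℤ) : distLat B x ≤ _root_.enorm (x - latPt B z) :=
  ciInf_le ⟨0, by rintro _ ⟨w, rfl⟩; exact Real.sqrt_nonneg _⟩ z

theorem distLat_le_enorm (x : Fin n → ℝ) : distLat B x ≤ _root_.enorm x := by
  simpa [latPt_zero] using distLat_le B x 0

theorem distLat_add_le (x y : Fin n → ℝ) : distLat B (x + y) ≤ distLat B x + distLat B y :=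
  le_ciInf_add_ciInf fun z w => calc
    distLat B (x + y) ≤ _root_.enorm (x + y - latPt B (z + w)) := distLat_le B _ _
    _ = _root_.enorm ((x - latPt B z) + (y - latPt B w)) := by rw [latPt_add]; abel_nf
    _ ≤ _ := by simpa only [enorm_eq_norm_toLp, WithLp.toLp_add] using norm_add_le _ _

theorem distLat_latPt_add (z : Fin n → ℤ) (x : Fin n → ℝ) :
    distLat B (latPt B z + x) = distLat B x := by
  rw [distLat, ← (Equiv.addRight z).iInf_comp]
  congr 1
  ext w
  rw [Equiv.coe_addRight, latPt_add]
  abel_nf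

theorem lipschitzWith_distLat_ofLp :
    LipschitzWith 1 fun v : EuclideanSpace ℝ (Fin n) => distLat B v.ofLp :=
  LipschitzWith.of_le_add fun v w => by
    simpa [dist_eq_norm, enorm_eq_norm_toLp] using
      (distLat_add_le B w.ofLp (v.ofLp - w.ofLp)).trans (add_le_add le_rfl (distLat_le_enorm B _))

theorem continuous_distLat : Continuous (distLat B) :=
  (lipschitzWith_distLat_ofLp B).continuous.comp (PiLp.continuous_toLp 2 _)

end Lattice

section Basis
variable {n : ℕ} (B : Matrix (Fin n) (Fin n) ℝ) (hB : IsUnit B.det)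

noncomputable def latBasis : Module.Basis (Fin n) ℝ (Fin n → ℝ) :=
  (Pi.basisFun ℝ (Fin n)).map (B.toLinearEquiv' (B.invertibleOfIsUnitDet hB))

theorem fundDom_eq_fundamentalDomain : fundDom B = ZSpan.fundamentalDomain (latBasis B hB) := by
  rw [latBasis, ← ZSpan.map_fundamentalDomain, ZSpan.fundamentalDomain_pi_basisFun]
  rfl

theorem exists_latPt_eq_of_mem_span {v : Fin n → ℝ}
    (hv : v ∈ Submodule.span ℤ (range (latBasis B hB))) : ∃ z, latPt B z = v := by
  set e := B.toLinearEquiv' (B.invertibleOfIsUnitDet hB)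
  choose z hz using (latBasis B hB).mem_span_iff_repr_mem ℤ v |>.mp hv
  refine ⟨z, ?_⟩
  have hcoords : (fun i => (z i : ℝ)) = e.symm v := by
    ext i
    simpa [latBasis] using hz i
  rw [latPt, hcoords]
  exact e.apply_symm_apply v

theorem isAddFundamentalDomain_fundDom :
    IsAddFundamentalDomain (Submodule.span ℤ (range (latBasis B hB))).toAddSubgroup (fundDom B)
      volume := by
  rw [fundDom_eq_fundamentalDomain B hB]
  exact ZSpan.isAddFundamentalDomain' _ _

instance : Countable (Submodule.span ℤ (range (latBasis B hB))).toAddSubgroup :=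
  inferInstanceAs (Countable (Submodule.span ℤ (range (latBasis B hB))))

theorem distLat_add_of_mem_span {v : Fin n → ℝ}
    (hv : v ∈ Submodule.span ℤ (range (latBasis B hB))) (x : Fin n → ℝ) :
    distLat B (v + x) = distLat B x := by
  obtain ⟨z, rfl⟩ := exists_latPt_eq_of_mem_span B hB hv
  exact distLat_latPt_add B z x

include hB in
theorem exists_covRad_le_distLat : ∃ t, covRad B ≤ distLat B t := by
  set b := latBasis B hB
  have hK : IsCompact (closure (ZSpan.fundamentalDomain b)) :=
    (ZSpan.fundamentalDomain_isBounded b).isCompact_closure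
  obtain ⟨t, -, ht⟩ := hK.exists_isMaxOn
    ⟨_, subset_closure (ZSpan.fract_mem_fundamentalDomain b 0)⟩ (continuous_distLat B).continuousOn
  refine ⟨t, ciSup_le fun x => ?_⟩
  rw [← add_sub_cancel (ZSpan.floor b x : Fin n → ℝ) x, ← ZSpan.fract_apply,
    distLat_add_of_mem_span B hB (ZSpan.floor b x).2]
  exact ht (subset_closure (ZSpan.fract_mem_fundamentalDomain b x))

end Basis

/-- For a uniformly random point `x` of the torus `ℝⁿ/Λ`, the probability that
`dist(x,Λ) ≥ μ(Λ)/2` is at least `1/2`. -/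
theorem stmt0 {n : ℕ} (B : Matrix (Fin n) (Fin n) ℝ) (hB : IsUnit B.det) :
    volume (fundDom B) / 2 ≤ volume {x ∈ fundDom B | covRad B / 2 ≤ distLat B x} := by
  obtain ⟨t, ht⟩ := exists_covRad_le_distLat B hB
  have hhalf := (isAddFundamentalDomain_fundDom B hB).measure_le_two_mul_measure_half_le
    (continuous_distLat B).measurable (fun _ hv => distLat_add_of_mem_span B hB hv) t
    fun x => by simpa using distLat_add_le B x (t - x)
  refine ENNReal.div_le_of_le_mul (hhalf.trans ?_)
  rw [mul_comm]
  gcongr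
end

section
/- For every integer k ≥ 1 and every real r > 0, k · Σ_{z=1}^∞ exp(−π (kz)² r) ≤ Σ_{z=1}^∞ exp(−π z² r). -/
open Real

/-- For every integer `k ≥ 1` and real `r > 0`,
`k · Σ_{z≥1} exp(−π (kz)² r) ≤ Σ_{z≥1} exp(−π z² r)`. -/
theorem stmt3 (k : ℕ) (hk : 1 ≤ k) (r : ℝ) (hr : 0 < r) :
    (k : ℝ) * ∑' z : ℕ, Real.exp (-π * ((k : ℝ) * ((z : ℝ) + 1)) ^ 2 * r) ≤
      ∑' z : ℕ, Real.exp (-π * ((z : ℝ) + 1) ^ 2 * r) := by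
  have hπ := Real.pi_pos
  set g : ℕ → ℝ := fun n => Real.exp (-π * ((n : ℝ) + 1) ^ 2 * r) with hgdef
  set f : ℕ → ℝ := fun z => Real.exp (-π * ((k : ℝ) * ((z : ℝ) + 1)) ^ 2 * r) with hfdef
  have hg_sum : Summable g := by
    have hb : Summable (fun n : ℕ => Real.exp (-π * r) ^ n) := by
      apply summable_geometric_of_lt_one (Real.exp_pos _).le
      rw [Real.exp_lt_one_iff]
      nlinarith [mul_pos hπ hr]
    refine Summable.of_nonneg_of_le (fun n => (Real.exp_pos _).le) (fun n => ?_) hb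
    rw [← Real.exp_nat_mul]
    apply Real.exp_le_exp.2
    have hn : (0:ℝ) ≤ (n:ℝ) := n.cast_nonneg
    nlinarith [sq_nonneg ((n:ℝ)), mul_pos hπ hr]
  have hk1 : (1:ℝ) ≤ (k:ℝ) := by exact_mod_cast hk
  set i : ℕ × Fin k → ℕ := fun p => k * p.1 + p.2 with hidef
  have hinj : Function.Injective i := by
    rintro ⟨z1, j1⟩ ⟨z2, j2⟩ h
    simp only [hidef] at h
    have h1 := j1.isLt
    have h2 := j2.isLt
    have hj : (j1 : ℕ) = (j2 : ℕ) := by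
      have e1 : (k * z1 + (j1:ℕ)) % k = (j1:ℕ) := by
        rw [Nat.mul_add_mod]; exact Nat.mod_eq_of_lt h1
      have e2 : (k * z2 + (j2:ℕ)) % k = (j2:ℕ) := by
        rw [Nat.mul_add_mod]; exact Nat.mod_eq_of_lt h2
      rw [← e1, ← e2, h]
    have hz : z1 = z2 := by
      have : k * z1 = k * z2 := by omega
      exact Nat.eq_of_mul_eq_mul_left (by omega) this
    exact Prod.ext hz (Fin.ext hj)
  have hfle : ∀ p : ℕ × Fin k, f p.1 ≤ g (i p) := by
    rintro ⟨z, j⟩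
    simp only [hidef, hgdef, hfdef]
    apply Real.exp_le_exp.2
    have hj : ((j : ℕ) : ℝ) + 1 ≤ (k : ℝ) := by exact_mod_cast j.isLt
    have hcast : ((k * z + (j : ℕ) : ℕ) : ℝ) = (k : ℝ) * z + (j : ℕ) := by
      push_cast; ring
    rw [hcast]
    have hz : (0:ℝ) ≤ (z:ℝ) := z.cast_nonneg
    have hjn : (0:ℝ) ≤ ((j:ℕ):ℝ) := by positivity
    have h1 : (k:ℝ) * z + ((j:ℕ):ℝ) + 1 ≤ (k:ℝ) * ((z:ℝ) + 1) := by nlinarith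
    have hsq : ((k:ℝ) * z + ((j:ℕ):ℝ) + 1)^2 ≤ ((k:ℝ) * ((z:ℝ) + 1))^2 :=
      pow_le_pow_left₀ (by positivity) h1 2
    nlinarith [mul_pos hπ hr]
  have hF_sum : Summable (fun p : ℕ × Fin k => f p.1) :=
    Summable.of_nonneg_of_le (fun p => (Real.exp_pos _).le) hfle
      (hg_sum.comp_injective hinj)
  have hle : ∑' p : ℕ × Fin k, f p.1 ≤ ∑' n, g n :=
    Summable.tsum_le_tsum_of_inj i hinj (fun c _ => (Real.exp_pos _).le) hfle hF_sum hg_sum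
  have hcalc : ∑' p : ℕ × Fin k, f p.1 = (k : ℝ) * ∑' z, f z := by
    rw [Summable.tsum_prod' hF_sum (fun b => Summable.of_finite)]
    have : ∀ z : ℕ, ∑' _ : Fin k, f z = (k : ℝ) * f z := by
      intro z
      rw [tsum_fintype]
      simp [Finset.sum_const, Finset.card_univ, nsmul_eq_mul]
    simp_rw [this]
    exact tsum_mul_left
  calc (k : ℝ) * ∑' z, f z = ∑' p : ℕ × Fin k, f p.1 := hcalc.symm
    _ ≤ ∑' n, g n := hle
end

section
/- Let Λ ⊂ ℝⁿ be a full-rank lattice and let ρ(S) = Σ_{y∈S} exp(−π‖y‖²). Then for every t ∈ ℝⁿ, ρ(Λ + t) ≥ ρ(t) · ρ(Λ). -/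
/-!
Pair each lattice vector `y` with `-y`. By the parallelogram law and convexity of `exp`,
`ρ(y + t) + ρ(y - t) ≥ 2 ρ(y) ρ(t)`; summing over `Λ = -Λ` gives `2 ρ(Λ + t) ≥ 2 ρ(t) ρ(Λ)`.
All series converge because an invertible `B` satisfies `‖Bz‖² ≥ δ ‖z‖²`, which dominates the
shifted lattice sums by a product of one-dimensional theta series.
-/

open Real Matrix

theorem summable_fintype_pi_prod {ι κ : Type*} [Fintype ι] {f : κ → ℝ} (hf₀ : 0 ≤ f)
    (hf : Summable f) : Summable fun x : ι → κ => ∏ i, f (x i) := by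
  classical
  refine summable_of_sum_le (c := (∑' k, f k) ^ Fintype.card ι)
    (fun x => Finset.prod_nonneg fun i _ => hf₀ (x i)) fun u => ?_
  set U : Finset κ := Finset.univ.biUnion fun i => u.image (· i)
  have hu : u ⊆ Fintype.piFinset fun _ => U := fun x hx =>
    Fintype.mem_piFinset.2 fun i =>
      Finset.mem_biUnion.2 ⟨i, Finset.mem_univ i, Finset.mem_image_of_mem _ hx⟩
  calc ∑ x ∈ u, ∏ i, f (x i)
      ≤ ∑ x ∈ Fintype.piFinset fun _ => U, ∏ i, f (x i) :=
        Finset.sum_le_sum_of_subset_of_nonneg hu fun x _ _ =>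
          Finset.prod_nonneg fun i _ => hf₀ (x i)
    _ = ∏ _i : ι, ∑ k ∈ U, f k := (Finset.prod_univ_sum _ _).symm
    _ ≤ ∏ _i : ι, ∑' k, f k :=
        Finset.prod_le_prod (fun _ _ => Finset.sum_nonneg fun k _ => hf₀ k)
          fun _ _ => hf.sum_le_tsum U fun k _ => hf₀ k
    _ = (∑' k, f k) ^ Fintype.card ι := Finset.prod_const _

theorem summable_exp_neg_mul_int_sq {a : ℝ} (ha : 0 < a) :
    Summable fun m : ℤ => exp (-a * (m : ℝ) ^ 2) := by
  refine (summable_pow_mul_jacobiTheta₂_term_bound 0 (div_pos ha pi_pos) 0).congr fun m => ?_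
  field_simp
  ring_nf

theorem summable_exp_neg_mul_sum_int_sq {ι : Type*} [Fintype ι] {a : ℝ} (ha : 0 < a) :
    Summable fun z : ι → ℤ => exp (-a * ∑ i, (z i : ℝ) ^ 2) := by
  simpa only [Finset.mul_sum, Real.exp_sum] using
    summable_fintype_pi_prod (fun m => (exp_pos _).le) (summable_exp_neg_mul_int_sq ha)

theorem exists_pos_mul_sum_sq_le_sum_mulVec_sq {ι : Type*} [Fintype ι] [DecidableEq ι]
    {B : Matrix ι ι ℝ} (hB : IsUnit B.det) :
    ∃ δ > 0, ∀ v : ι → ℝ, δ * ∑ i, v i ^ 2 ≤ ∑ i, (B *ᵥ v) i ^ 2 := by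
  set K := ‖toEuclideanCLM (𝕜 := ℝ) B⁻¹‖ + 1
  have hK : 0 < K := by positivity
  refine ⟨(K ^ 2)⁻¹, by positivity, fun v => ?_⟩
  have hv : ‖WithLp.toLp 2 v‖ ≤ K * ‖WithLp.toLp 2 (B *ᵥ v)‖ := by
    have h := (toEuclideanCLM (𝕜 := ℝ) B⁻¹).le_opNorm (WithLp.toLp 2 (B *ᵥ v))
    rw [toEuclideanCLM_toLp, mulVec_mulVec, nonsing_inv_mul B hB, one_mulVec] at h
    nlinarith [norm_nonneg (WithLp.toLp 2 (B *ᵥ v))]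
  have hsq := pow_le_pow_left₀ (norm_nonneg _) hv 2
  rw [mul_pow, EuclideanSpace.real_norm_sq_eq, EuclideanSpace.real_norm_sq_eq] at hsq
  rw [inv_mul_le_iff₀ (by positivity)]
  simpa using hsq

-- The paper's `ρ(x) = exp(-π‖x‖²)`.
noncomputable def gaussianWeight {ι : Type*} [Fintype ι] (x : ι → ℝ) : ℝ :=
  exp (-π * ∑ i, x i ^ 2)

section
variable {ι : Type*} [Fintype ι]

theorem gaussianWeight_neg (x : ι → ℝ) : gaussianWeight (-x) = gaussianWeight x := by
  simp [gaussianWeight]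

theorem gaussianWeight_nonneg (x : ι → ℝ) : 0 ≤ gaussianWeight x := (exp_pos _).le

theorem sum_sq_div_two_sub_sum_sq_le_sum_add_sq (x y : ι → ℝ) :
    (∑ i, x i ^ 2) / 2 - ∑ i, y i ^ 2 ≤ ∑ i, (x i + y i) ^ 2 := by
  rw [Finset.sum_div, ← Finset.sum_sub_distrib]
  exact Finset.sum_le_sum fun i _ => by nlinarith [sq_nonneg (x i + 2 * y i)]

theorem summable_gaussianWeight_mulVec_add [DecidableEq ι] {B : Matrix ι ι ℝ}
    (hB : IsUnit B.det) (c : ι → ℝ) :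
    Summable fun z : ι → ℤ => gaussianWeight (B *ᵥ (fun i => (z i : ℝ)) + c) := by
  obtain ⟨δ, hδ, hcoercive⟩ := exists_pos_mul_sum_sq_le_sum_mulVec_sq hB
  refine ((summable_exp_neg_mul_sum_int_sq (by positivity : 0 < π * δ / 2)).mul_left
    (exp (π * ∑ i, c i ^ 2))).of_nonneg_of_le (fun z => gaussianWeight_nonneg _) fun z => ?_
  set v : ι → ℝ := fun i => (z i : ℝ)
  have hv := hcoercive v
  have hc := sum_sq_div_two_sub_sum_sq_le_sum_add_sq (B *ᵥ v) c
  rw [gaussianWeight, ← exp_add, exp_le_exp]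
  simp only [Pi.add_apply]
  nlinarith [pi_pos]

theorem exp_add_div_two_le (p q : ℝ) : exp ((p + q) / 2) ≤ (exp p + exp q) / 2 := by
  have h := convexOn_exp.2 (Set.mem_univ p) (Set.mem_univ q) (by norm_num : (0 : ℝ) ≤ 1 / 2)
    (by norm_num : (0 : ℝ) ≤ 1 / 2) (by norm_num)
  simp only [smul_eq_mul] at h
  calc exp ((p + q) / 2) = exp (1 / 2 * p + 1 / 2 * q) := by ring_nf
    _ ≤ 1 / 2 * exp p + 1 / 2 * exp q := h
    _ = (exp p + exp q) / 2 := by ring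

theorem gaussianWeight_mul_le (x t : ι → ℝ) :
    gaussianWeight t * gaussianWeight x ≤
      (gaussianWeight (x + t) + gaussianWeight (x - t)) / 2 := by
  have parallelogram : ∑ i, (x + t) i ^ 2 + ∑ i, (x - t) i ^ 2 =
      2 * ∑ i, t i ^ 2 + 2 * ∑ i, x i ^ 2 := by
    simp only [Pi.add_apply, Pi.sub_apply, Finset.mul_sum, ← Finset.sum_add_distrib]
    exact Finset.sum_congr rfl fun i _ => by ring
  calc gaussianWeight t * gaussianWeight x
      = exp ((-π * ∑ i, (x + t) i ^ 2 + -π * ∑ i, (x - t) i ^ 2) / 2) := by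
        rw [gaussianWeight, gaussianWeight, ← exp_add]
        congr 1
        linear_combination (π / 2) * parallelogram
    _ ≤ _ := exp_add_div_two_le _ _
end

theorem latPt_neg {n : ℕ} (B : Matrix (Fin n) (Fin n) ℝ) (z : Fin n → ℤ) :
    latPt B (-z) = -latPt B z := by
  rw [latPt, latPt, ← mulVec_neg]
  congr 1
  ext i
  simp

/-- For a full-rank lattice `Λ ⊂ ℝⁿ` and any `t ∈ ℝⁿ`, `ρ(Λ + t) ≥ ρ(t)·ρ(Λ)`,
where `ρ(S) = Σ_{y∈S} exp(−π‖y‖²)`. -/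
theorem stmt4 {n : ℕ} (B : Matrix (Fin n) (Fin n) ℝ) (hB : IsUnit B.det) (t : Fin n → ℝ) :
    Real.exp (-π * ∑ i, t i ^ 2) * ∑' z : Fin n → ℤ, Real.exp (-π * ∑ i, latPt B z i ^ 2) ≤
      ∑' z : Fin n → ℤ, Real.exp (-π * ∑ i, (latPt B z i + t i) ^ 2) := by
  change gaussianWeight t * ∑' z, gaussianWeight (latPt B z) ≤
    ∑' z, gaussianWeight (latPt B z + t)
  have hsum (c : Fin n → ℝ) : Summable fun z => gaussianWeight (latPt B z + c) :=
    summable_gaussianWeight_mulVec_add hB c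
  have hsum_zero : Summable fun z => gaussianWeight (latPt B z) := by
    simpa only [add_zero] using hsum 0
  have hsum_sub : Summable fun z => gaussianWeight (latPt B z - t) := by
    simpa only [sub_eq_add_neg] using hsum (-t)
  have hreflect : ∑' z, gaussianWeight (latPt B z - t) = ∑' z, gaussianWeight (latPt B z + t) := by
    rw [← (Equiv.neg _).tsum_eq]
    simp only [Equiv.neg_apply, latPt_neg, ← neg_add', gaussianWeight_neg]
  calc gaussianWeight t * ∑' z, gaussianWeight (latPt B z)
      = ∑' z, gaussianWeight t * gaussianWeight (latPt B z) := tsum_mul_left.symm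
    _ ≤ ∑' z, (gaussianWeight (latPt B z + t) + gaussianWeight (latPt B z - t)) / 2 :=
        Summable.tsum_le_tsum (fun z => gaussianWeight_mul_le _ _)
          (hsum_zero.mul_left _) (((hsum t).add hsum_sub).div_const 2)
    _ = ∑' z, gaussianWeight (latPt B z + t) := by
        rw [tsum_div_const, (hsum t).tsum_add hsum_sub, hreflect]
        ring
end

section
/- For an n-dimensional lattice Λ, define η̃ = max over r>0 of √(log|Λ* ∩ rB₂ⁿ| / π) / r, where Λ* is the dual lattice and B₂ⁿ the unit ball. Let η(Λ) be the unique s>0 with Σ_{y∈Λ*\{0}} exp(−π‖sy‖²) = 1/2. Then η(Λ)/√3 ≤ η̃ ≤ η(Λ). -/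
/-!
Write `N(r)` for the number of dual lattice points of norm at most `r`. Each of the `N(r) - 1`
nonzero ones contributes at least `exp (-π s² r²)` to the sum `Σ_{y ≠ 0} exp (-π s² ‖y‖²) = 1/2`,
so `N(r) - 1 ≤ exp (π s² r²) / 2`, whence `log N(r) ≤ π s² r²`, i.e. `η̃ ≤ s`.
Conversely, if `3 η̃² < s²`, each nonzero dual point `y` contributes at most `N(‖y‖)⁻³`. Listing
the nonzero points by increasing norm, the `k`-th one has `N(‖y‖) ≥ k + 1` (the origin is counted
too), so the sum is at most `Σ_{k ≥ 2} k⁻³ ≤ 1/4 < 1/2`.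
-/

open Real Matrix

/-- Euclidean norm on `Fin n → ℝ`. -/
noncomputable def enormFin {n : ℕ} (x : Fin n → ℝ) : ℝ := Real.sqrt (∑ i, x i ^ 2)

/-- The dual lattice point of `Λ* = B⁻ᵀ·ℤⁿ` corresponding to `z`. -/
noncomputable def dualPt {n : ℕ} (B : Matrix (Fin n) (Fin n) ℝ) (z : Fin n → ℤ) : Fin n → ℝ :=
  (B⁻¹)ᵀ.mulVec fun i => (z i : ℝ)

/-- `η̃ = max_{r>0} √(log|Λ* ∩ rB₂ⁿ|/π)/r` for the lattice `Λ = B·ℤⁿ`. -/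
noncomputable def etaTilde {n : ℕ} (B : Matrix (Fin n) (Fin n) ℝ) : ℝ :=
  ⨆ r : {r : ℝ // 0 < r},
    Real.sqrt (Real.log (Nat.card {z : Fin n → ℤ // enormFin (dualPt B z) ≤ r.1} : ℝ) / π) / r.1

open Finset

theorem Finset.sum_le_sum_range_of_rank_lt {ι β : Type*} [LinearOrder β] {φ : ℕ → ℝ}
    (hφ : AntitoneOn φ (Set.Ici 2)) (key : ι → β) (m : ι → ℕ) (T : Finset ι)
    (hT : ∀ a ∈ T, #{b ∈ T | key b ≤ key a} < m a) :
    ∑ a ∈ T, φ (m a) ≤ ∑ k ∈ range #T, φ (k + 2) := by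
  classical
  induction T using Finset.induction_on_max_value key with
  | empty => simp
  | insert a T haT hmax ih =>
    have hT' : ∀ b ∈ T, #{c ∈ T | key c ≤ key b} < m b := fun b hb =>
      (card_le_card (filter_subset_filter _ (subset_insert a T))).trans_lt
        (hT b (mem_insert_of_mem hb))
    have hma : #T + 2 ≤ m a := by
      have hall : ∀ b ∈ insert a T, key b ≤ key a := (forall_mem_insert _ _ _).2 ⟨le_rfl, hmax⟩
      have h := hT a (mem_insert_self a T)
      rw [filter_true_of_mem hall, card_insert_of_notMem haT] at h
      omega
    rw [sum_insert haT, card_insert_of_notMem haT, sum_range_succ, add_comm]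
    exact add_le_add (ih hT') (hφ (by simp) (by simp; omega) hma)

lemma antitoneOn_inv_pow_three : AntitoneOn (fun k : ℕ => ((k : ℝ) ^ 3)⁻¹) (Set.Ici 2) :=
  fun i hi _ _ hij => inv_anti₀ (by simp at hi; positivity)
    (pow_le_pow_left₀ (Nat.cast_nonneg i) (Nat.cast_le.2 hij) 3)

lemma sum_range_inv_pow_three_le (N : ℕ) : ∑ k ∈ range N, (((k + 2 : ℕ) : ℝ) ^ 3)⁻¹ ≤ 1 / 4 := by
  suffices h : ∑ k ∈ range N, (((k + 2 : ℕ) : ℝ) ^ 3)⁻¹ ≤ 1 / 4 - 1 / (4 * (N + 1)) by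
    linarith [show (0 : ℝ) ≤ 1 / (4 * (N + 1)) by positivity]
  induction N with
  | zero => norm_num
  | succ N ih =>
    -- telescoping: `(N + 2)⁻³ ≤ (4 (N + 1) (N + 2))⁻¹ = (4 (N + 1))⁻¹ - (4 (N + 2))⁻¹`
    have hterm : (((N + 2 : ℕ) : ℝ) ^ 3)⁻¹ ≤ 1 / (4 * (N + 1)) - 1 / (4 * ((N + 1 : ℕ) + 1)) := by
      rw [show 1 / (4 * ((N : ℝ) + 1)) - 1 / (4 * ((N + 1 : ℕ) + 1)) =
          (4 * ((N : ℝ) + 1) * (N + 2))⁻¹ by push_cast; field_simp; ring]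
      exact inv_anti₀ (by positivity) (by push_cast; nlinarith [sq_nonneg (N : ℝ)])
    rw [sum_range_succ]
    linarith

lemma exp_neg_pi_mul_sq_le {s x r : ℝ} (hx : 0 ≤ x) (hxr : x ≤ r) :
    exp (-π * s ^ 2 * r ^ 2) ≤ exp (-π * s ^ 2 * x ^ 2) :=
  exp_le_exp.2 (by nlinarith [pow_le_pow_left₀ hx hxr 2, mul_nonneg pi_pos.le (sq_nonneg s)])

lemma sqrt_log_div_pi_div_le_iff {x r t : ℝ} (hr : 0 < r) (ht : 0 ≤ t) :
    √(log x / π) / r ≤ t ↔ log x ≤ π * t ^ 2 * r ^ 2 := by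
  rw [div_le_iff₀ hr, sqrt_le_iff, and_iff_right (by positivity), div_le_iff₀ pi_pos]
  constructor <;> intro h <;> linarith

section BallCount

variable {α : Type*} {ρ : α → ℝ}

variable (ρ) in
noncomputable def ballCount (r : ℝ) : ℕ := Nat.card {a // ρ a ≤ r}

lemma ballCount_eq_card_toFinset {r : ℝ} (h : {a | ρ a ≤ r}.Finite) :
    ballCount ρ r = #h.toFinset :=
  Set.ncard_eq_toFinset_card _ h

variable [Zero α]

lemma finite_setOf_le_of_summable {s : ℝ} (hρ : ∀ a, 0 ≤ ρ a)
    (hsumm : Summable fun a : {a : α // a ≠ 0} => exp (-π * s ^ 2 * ρ a ^ 2)) (r : ℝ) :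
    {a | ρ a ≤ r}.Finite := by
  have hev := hsumm.tendsto_cofinite_zero.eventually (gt_mem_nhds (exp_pos (-π * s ^ 2 * r ^ 2)))
  refine (((Filter.eventually_cofinite.1 hev).image Subtype.val).insert 0).subset fun a ha => ?_
  by_cases h0 : a = 0
  · exact Or.inl h0
  · exact Or.inr ⟨⟨a, h0⟩, not_lt.2 (exp_neg_pi_mul_sq_le (hρ a) ha), rfl⟩

lemma ballCount_le_exp {s : ℝ} (hρ : ∀ a, 0 ≤ ρ a)
    (hsumm : Summable fun a : {a : α // a ≠ 0} => exp (-π * s ^ 2 * ρ a ^ 2))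
    (hθ : ∑' a : {a : α // a ≠ 0}, exp (-π * s ^ 2 * ρ a ^ 2) ≤ 1 / 2) (r : ℝ) :
    (ballCount ρ r : ℝ) ≤ exp (π * s ^ 2 * r ^ 2) := by
  classical
  have hfin := finite_setOf_le_of_summable hρ hsumm r
  set S := hfin.toFinset
  set T := S.subtype (· ≠ 0)
  have hST : #S ≤ #T + 1 := by
    rw [card_subtype, filter_ne', ← Nat.sub_le_iff_le_add]
    exact pred_card_le_card_erase
  have hT : #T * exp (-π * s ^ 2 * r ^ 2) ≤ 1 / 2 :=
    calc #T * exp (-π * s ^ 2 * r ^ 2)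
        ≤ ∑ a ∈ T, exp (-π * s ^ 2 * ρ a ^ 2) := by
          rw [← nsmul_eq_mul]
          exact card_nsmul_le_sum _ _ _ fun a ha =>
            exp_neg_pi_mul_sq_le (hρ a) (by simpa [T, S] using ha)
      _ ≤ _ := hsumm.sum_le_tsum _ fun _ _ => (exp_pos _).le
      _ ≤ 1 / 2 := hθ
  set X := exp (π * s ^ 2 * r ^ 2)
  have hX : 1 ≤ X := one_le_exp (by positivity)
  have hTX : (#T : ℝ) ≤ X / 2 := by
    rw [show exp (-π * s ^ 2 * r ^ 2) = X⁻¹ by rw [← exp_neg]; ring_nf, ← div_eq_mul_inv,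
      div_le_iff₀ (by positivity)] at hT
    linarith
  rw [ballCount_eq_card_toFinset hfin]
  have hST' : (#S : ℝ) ≤ #T + 1 := by exact_mod_cast hST
  -- if `#S ≥ 2` then `X ≥ 2 (#S - 1) ≥ #S`
  rcases Nat.lt_or_ge #S 2 with hS | hS
  · have : (#S : ℝ) ≤ 1 := by exact_mod_cast Nat.lt_succ_iff.1 hS
    linarith
  · have : (2 : ℝ) ≤ #S := by exact_mod_cast hS
    linarith

lemma log_ballCount_le {s : ℝ} (hρ : ∀ a, 0 ≤ ρ a)
    (hsumm : Summable fun a : {a : α // a ≠ 0} => exp (-π * s ^ 2 * ρ a ^ 2))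
    (hθ : ∑' a : {a : α // a ≠ 0}, exp (-π * s ^ 2 * ρ a ^ 2) ≤ 1 / 2) (r : ℝ) :
    log (ballCount ρ r) ≤ π * s ^ 2 * r ^ 2 := by
  rcases (ballCount ρ r).eq_zero_or_pos with h | h
  · rw [h, Nat.cast_zero, log_zero]
    positivity
  · rw [← log_exp (π * s ^ 2 * r ^ 2)]
    exact log_le_log (by exact_mod_cast h) (ballCount_le_exp hρ hsumm hθ r)

lemma card_filter_le_lt_ballCount (hρ0 : ρ 0 = 0) (hρpos : ∀ a, a ≠ 0 → 0 < ρ a)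
    (hfin : ∀ r, {a | ρ a ≤ r}.Finite) (T : Finset {a : α // a ≠ 0}) (a : {a : α // a ≠ 0}) :
    #{b ∈ T | ρ b.1 ≤ ρ a.1} < ballCount ρ (ρ a) := by
  classical
  rw [ballCount_eq_card_toFinset (hfin _)]
  refine lt_of_le_of_lt ?_ (card_erase_lt_of_mem (a := 0) ?_)
  · refine card_le_card_of_injOn Subtype.val (fun b hb => ?_) Subtype.val_injective.injOn
    simp only [coe_filter, Set.mem_ofPred_eq] at hb
    exact mem_erase.2 ⟨b.2, (hfin _).mem_toFinset.2 hb.2⟩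
  · simpa [hρ0] using (hρpos a a.2).le

lemma exp_neg_pi_mul_le_inv_ballCount_pow_three {s t : ℝ} (hρpos : ∀ a, a ≠ 0 → 0 < ρ a)
    (hfin : ∀ r, {a | ρ a ≤ r}.Finite)
    (hlog : ∀ r, 0 < r → log (ballCount ρ r) ≤ π * t ^ 2 * r ^ 2) (hst : 3 * t ^ 2 ≤ s ^ 2)
    (a : {a : α // a ≠ 0}) :
    exp (-π * s ^ 2 * ρ a ^ 2) ≤ ((ballCount ρ (ρ a) : ℝ) ^ 3)⁻¹ := by
  have hN : (0 : ℝ) < ballCount ρ (ρ a) := by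
    rw [ballCount_eq_card_toFinset (hfin _), Nat.cast_pos, card_pos]
    exact ⟨a, by simp⟩
  rw [← exp_log (pow_pos hN 3), ← exp_neg, log_pow, Nat.cast_ofNat]
  refine exp_le_exp.2 ?_
  nlinarith [hlog _ (hρpos a a.2), mul_le_mul_of_nonneg_right hst
    (mul_nonneg pi_pos.le (sq_nonneg (ρ a)))]

lemma tsum_exp_neg_pi_mul_le_quarter {s t : ℝ} (hρ0 : ρ 0 = 0) (hρpos : ∀ a, a ≠ 0 → 0 < ρ a)
    (hfin : ∀ r, {a | ρ a ≤ r}.Finite)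
    (hlog : ∀ r, 0 < r → log (ballCount ρ r) ≤ π * t ^ 2 * r ^ 2) (hst : 3 * t ^ 2 ≤ s ^ 2) :
    ∑' a : {a : α // a ≠ 0}, exp (-π * s ^ 2 * ρ a ^ 2) ≤ 1 / 4 := by
  refine tsum_le_of_sum_le' (by norm_num) fun T => ?_
  calc ∑ a ∈ T, exp (-π * s ^ 2 * ρ a ^ 2)
      ≤ ∑ a ∈ T, ((ballCount ρ (ρ a) : ℝ) ^ 3)⁻¹ :=
        sum_le_sum fun a _ => exp_neg_pi_mul_le_inv_ballCount_pow_three hρpos hfin hlog hst a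
    _ ≤ ∑ k ∈ range #T, (((k + 2 : ℕ) : ℝ) ^ 3)⁻¹ :=
        T.sum_le_sum_range_of_rank_lt antitoneOn_inv_pow_three
          (fun a : {a : α // a ≠ 0} => ρ a) (fun a : {a : α // a ≠ 0} => ballCount ρ (ρ a))
          fun a _ => card_filter_le_lt_ballCount hρ0 hρpos hfin T a
    _ ≤ 1 / 4 := sum_range_inv_pow_three_le _

end BallCount

lemma enormFin_pos {n : ℕ} {x : Fin n → ℝ} (hx : x ≠ 0) : 0 < enormFin x := by
  have : enormFin x = ‖WithLp.toLp 2 x‖ := by simp [enormFin, EuclideanSpace.norm_eq]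
  rw [this, norm_pos_iff]
  simpa using hx

lemma dualPt_ne_zero {n : ℕ} {B : Matrix (Fin n) (Fin n) ℝ} (hB : IsUnit B.det)
    {z : Fin n → ℤ} (hz : z ≠ 0) : dualPt B z ≠ 0 := by
  have hinj := mulVec_injective_of_isUnit
    ((isUnit_transpose _).2 (isUnit_nonsing_inv_iff.2 ((isUnit_iff_isUnit_det B).2 hB)))
  intro h
  refine hz (funext fun i => ?_)
  simpa using congrFun (hinj (h.trans (mulVec_zero _).symm)) i

/-- If `s > 0` is the smoothing parameter of `Λ` (i.e. `Σ_{y∈Λ*\0} exp(−π‖sy‖²) = 1/2`),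
then `s/√3 ≤ η̃ ≤ s`. -/
theorem stmt5 {n : ℕ} (B : Matrix (Fin n) (Fin n) ℝ) (hB : IsUnit B.det)
    (s : ℝ) (hs : 0 < s)
    (hsum : (∑' z : {z : Fin n → ℤ // z ≠ 0},
        Real.exp (-π * s ^ 2 * ∑ i, dualPt B z.1 i ^ 2)) = 1 / 2) :
    s / Real.sqrt 3 ≤ etaTilde B ∧ etaTilde B ≤ s := by
  set ρ : (Fin n → ℤ) → ℝ := fun z => enormFin (dualPt B z)
  have hρ : ∀ z, 0 ≤ ρ z := fun z => sqrt_nonneg _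
  have hρ0 : ρ 0 = 0 := by simp [ρ, dualPt, enormFin, ← Pi.zero_def]
  have hρpos : ∀ z, z ≠ 0 → 0 < ρ z := fun z hz => enormFin_pos (dualPt_ne_zero hB hz)
  have hθ : ∑' z : {z : Fin n → ℤ // z ≠ 0}, exp (-π * s ^ 2 * ρ z ^ 2) = 1 / 2 := by
    simpa only [ρ, enormFin, sq_sqrt (sum_nonneg fun i _ => sq_nonneg _)] using hsum
  have hsumm : Summable fun z : {z : Fin n → ℤ // z ≠ 0} => exp (-π * s ^ 2 * ρ z ^ 2) := by
    by_contra h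
    rw [tsum_eq_zero_of_not_summable h] at hθ
    norm_num at hθ
  have hterm : ∀ r : {r : ℝ // 0 < r}, √(log (ballCount ρ r) / π) / r ≤ s := fun r =>
    (sqrt_log_div_pi_div_le_iff r.2 hs.le).2 (log_ballCount_le hρ hsumm hθ.le r)
  have hbdd : BddAbove (Set.range fun r : {r : ℝ // 0 < r} => √(log (ballCount ρ r) / π) / r) :=
    ⟨s, Set.forall_mem_range.2 hterm⟩
  refine ⟨?_, ciSup_le hterm⟩
  by_contra! hlt
  set t := etaTilde B
  have ht : 0 ≤ t := le_ciSup_of_le hbdd ⟨1, one_pos⟩ (by positivity)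
  have hlog : ∀ r, 0 < r → log (ballCount ρ r) ≤ π * t ^ 2 * r ^ 2 := fun r hr =>
    (sqrt_log_div_pi_div_le_iff hr ht).1 (le_ciSup hbdd ⟨r, hr⟩)
  have hst : 3 * t ^ 2 ≤ s ^ 2 := by
    have := (lt_div_iff₀ (sqrt_pos.2 three_pos)).1 hlt
    nlinarith [sq_sqrt zero_le_three, mul_nonneg ht (sqrt_nonneg 3)]
  have := tsum_exp_neg_pi_mul_le_quarter hρ0 hρpos (finite_setOf_le_of_summable hρ hsumm) hlog hst
  linarith
end

section
/- Let a₁,…,a_m ≥ 0 be reals and d₁,…,d_m positive integers, and for S ⊆ [m] let d_S = Σ_{i∈S} d_i. Then Σ_{i=1}^m d_i a_i ≤ 4⌈log₂(2 d_{[m]})⌉ · max over S ⊆ [m] of d_S · (∏_{i∈S} a_i^{d_i})^{1/d_S}. -/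
open Real Finset

/-!
Order the indices by the value of `a` (ties broken by index) and let `F i` be the total weight
`d_S` of the set `S` of indices at or above `i`. The weighted geometric mean of `a` over `S` is at
least `a i`, so `F i * a i` is at most the maximum `M`, and `∑ dᵢ aᵢ ≤ M ∑ dᵢ / F i`. Going up the
order, `F` drops from `d_{[m]}` by `d i` at each step, so `∑ dᵢ / F i` is at most the harmonic
number `H_{d_{[m]}} ≤ 1 + log d_{[m]}`.
-/

theorem harmonic_add_div_le (n d : ℕ) :
    (harmonic n : ℝ) + d / (n + d) ≤ harmonic (n + d) := by
  induction d with
  | zero => simp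
  | succ d ih =>
    have hshrink : (d : ℝ) / (n + d + 1) ≤ d / (n + d) := by
      rcases Nat.eq_zero_or_pos d with rfl | hd
      · simp
      · exact div_le_div_of_nonneg_left d.cast_nonneg (by positivity) (by linarith)
    rw [← add_assoc, harmonic_succ]
    push_cast at ih ⊢
    rw [← add_assoc, add_div, ← one_div]
    linarith

theorem sum_div_sum_filter_le_harmonic {ι α : Type*} [DecidableEq ι] [LinearOrder α]
    (key : ι → α) (hkey : Function.Injective key) (d : ι → ℕ) (s : Finset ι) :
    ∑ i ∈ s, (d i : ℝ) / ∑ j ∈ s with key i ≤ key j, (d j : ℝ) ≤ harmonic (∑ i ∈ s, d i) := by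
  induction s using Finset.induction_on_min_value key with
  | empty => simp
  | insert a s ha hmin ih =>
    have hfilter_min : {j ∈ insert a s | key a ≤ key j} = insert a s :=
      filter_true_of_mem fun j hj => (mem_insert.1 hj).elim (fun h => h ▸ le_rfl) (hmin j)
    have hfilter : ∀ i ∈ s, {j ∈ insert a s | key i ≤ key j} = {j ∈ s | key i ≤ key j} := by
      intro i hi
      have : ¬ key i ≤ key a := fun h =>
        ne_of_mem_of_not_mem hi ha (hkey (le_antisymm h (hmin i hi)))
      rw [filter_insert, if_neg this]
    have hrest : ∑ i ∈ s, (d i : ℝ) / ∑ j ∈ insert a s with key i ≤ key j, (d j : ℝ) =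
        ∑ i ∈ s, (d i : ℝ) / ∑ j ∈ s with key i ≤ key j, (d j : ℝ) :=
      sum_congr rfl fun i hi => by rw [hfilter i hi]
    have hstep := harmonic_add_div_le (∑ i ∈ s, d i) (d a)
    rw [sum_insert ha, hfilter_min, hrest, sum_insert ha, sum_insert ha, add_comm (d a)]
    push_cast at hstep ⊢
    rw [add_comm (d a : ℝ)]
    linarith

theorem harmonic_le_four_mul_ceil_logb (n : ℕ) :
    (harmonic n : ℝ) ≤ 4 * ⌈logb 2 (2 * n)⌉ := by
  rcases Nat.eq_zero_or_pos n with rfl | hn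
  · simp
  have hn' : (1 : ℝ) ≤ n := by exact_mod_cast hn
  have hlog : log n ≤ logb 2 n :=
    le_div_self (log_nonneg hn') (log_pos one_lt_two) (log_two_lt_d9.le.trans (by norm_num))
  have hceil : (0 : ℝ) ≤ ⌈logb 2 (2 * n)⌉ := by
    exact_mod_cast Int.ceil_nonneg (logb_nonneg one_lt_two (by linarith : (1 : ℝ) ≤ 2 * n))
  calc (harmonic n : ℝ) ≤ 1 + log n := harmonic_le_one_add_log n
    _ ≤ logb 2 (2 * n) := by
      rw [logb_mul two_ne_zero (by positivity), logb_self_eq_one one_lt_two]; linarith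
    _ ≤ ⌈logb 2 (2 * n)⌉ := Int.le_ceil _
    _ ≤ 4 * ⌈logb 2 (2 * n)⌉ := by linarith

theorem sum_mul_le_sum_mul_prod_pow_rpow_inv {ι : Type*} (s : Finset ι) (d : ι → ℕ)
    (b : ι → ℝ) {c : ℝ} (hc : 0 ≤ c) (hcb : ∀ j ∈ s, c ≤ b j) :
    (∑ j ∈ s, (d j : ℝ)) * c ≤
      (∑ j ∈ s, (d j : ℝ)) * (∏ j ∈ s, b j ^ d j) ^ (∑ j ∈ s, (d j : ℝ))⁻¹ := by
  rw [← Nat.cast_sum]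
  rcases Nat.eq_zero_or_pos (∑ j ∈ s, d j) with hD | hD
  · simp [hD]
  gcongr
  calc c = (c ^ ∑ j ∈ s, d j) ^ ((∑ j ∈ s, d j : ℕ) : ℝ)⁻¹ := (pow_rpow_inv_natCast hc hD.ne').symm
    _ ≤ _ := by
      rw [← prod_pow_eq_pow_sum]
      gcongr with j hj
      exact hcb j hj

theorem mul_le_div_mul_of_le_of_mul_le {d F x M : ℝ} (hd : 0 ≤ d) (hdF : d ≤ F)
    (hFx : F * x ≤ M) : d * x ≤ d / F * M := by
  rcases (hd.trans hdF).eq_or_lt with hF | hF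
  · obtain rfl : d = 0 := by linarith
    simp
  · calc d * x = d / F * (F * x) := by field_simp
      _ ≤ d / F * M := by gcongr

theorem stmt6_general {m : ℕ} (a : Fin m → ℝ) (ha : ∀ i, 0 ≤ a i)
    (d : Fin m → ℕ) :
    ∑ i, (d i : ℝ) * a i ≤
      4 * (⌈Real.logb 2 (2 * ∑ i, (d i : ℝ))⌉ : ℝ) *
        (Finset.univ.powerset).sup' ⟨∅, Finset.empty_mem_powerset _⟩
          (fun S : Finset (Fin m) =>
            (∑ i ∈ S, (d i : ℝ)) *
              (∏ i ∈ S, a i ^ d i) ^ ((∑ i ∈ S, (d i : ℝ))⁻¹)) := by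
  classical
  set f : Finset (Fin m) → ℝ := fun S =>
    (∑ i ∈ S, (d i : ℝ)) * (∏ i ∈ S, a i ^ d i) ^ ((∑ i ∈ S, (d i : ℝ))⁻¹)
  set M := univ.powerset.sup' ⟨∅, empty_mem_powerset _⟩ f
  have hM : 0 ≤ M := (by simp [f] : 0 = f ∅).trans_le (le_sup' f (empty_mem_powerset univ))
  let key : Fin m → ℝ ×ₗ Fin m := fun i => toLex (a i, i)
  have hkey : Function.Injective key := fun i j h => congrArg (fun x => (ofLex x).2) h
  set F : Fin m → ℝ := fun i => ∑ j with key i ≤ key j, (d j : ℝ)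
  have hFa : ∀ i, F i * a i ≤ M := fun i =>
    (sum_mul_le_sum_mul_prod_pow_rpow_inv _ d a (ha i)
      fun j hj => Prod.Lex.monotone_fst _ _ (mem_filter.1 hj).2).trans
      (le_sup' f (mem_powerset.2 (subset_univ _)))
  calc ∑ i, (d i : ℝ) * a i ≤ (∑ i, (d i : ℝ) / F i) * M := by
        rw [sum_mul]
        exact sum_le_sum fun i _ => mul_le_div_mul_of_le_of_mul_le (d i).cast_nonneg
          (single_le_sum (fun j _ => (d j).cast_nonneg) (by simp)) (hFa i)
    _ ≤ harmonic (∑ i, d i) * M := by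
        gcongr; exact sum_div_sum_filter_le_harmonic key hkey d univ
    _ ≤ _ := by
        gcongr
        exact_mod_cast harmonic_le_four_mul_ceil_logb (∑ i, d i)

/-- Reverse AM-GM: `Σᵢ dᵢaᵢ ≤ 4⌈log₂(2 d_{[m]})⌉ · max_{S⊆[m]} d_S (∏_{i∈S} aᵢ^{dᵢ})^{1/d_S}`. -/
theorem stmt6 {m : ℕ} (a : Fin m → ℝ) (ha : ∀ i, 0 ≤ a i)
    (d : Fin m → ℕ) (hd : ∀ i, 0 < d i) :
    ∑ i, (d i : ℝ) * a i ≤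
      4 * (⌈Real.logb 2 (2 * ∑ i, (d i : ℝ))⌉ : ℝ) *
        (Finset.univ.powerset).sup' ⟨∅, Finset.empty_mem_powerset _⟩
          (fun S : Finset (Fin m) =>
            (∑ i ∈ S, (d i : ℝ)) *
              (∏ i ∈ S, a i ^ d i) ^ ((∑ i ∈ S, (d i : ℝ))⁻¹)) :=
  stmt6_general a ha d
end

section
/- Let Λ be a lattice in ℝⁿ spanning the subspace W, and A an invertible n×n matrix. Then det(AΛ) = det_W(AᵀA)^{1/2} · det(Λ), where det_W(X) = det(O_Wᵀ X O_W) for any matrix O_W whose columns form an orthonormal basis of W, and det(Λ) = √det(BᵀB) for any basis B of Λ. -/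
/-!
Since the columns of `B` lie in the column space of `O` and `OᵀO = 1`, the matrix `O Oᵀ` fixes
them, so `B = O C` with the square matrix `C = Oᵀ B`. Then `(AB)ᵀ(AB) = Cᵀ (Oᵀ AᵀA O) C` and
`BᵀB = CᵀC`, and both square roots of determinants pick up the same factor `|det C|`.
-/

open Matrix

namespace Matrix

variable {m k l : Type*} [Fintype m] [Fintype k] [DecidableEq k] [Fintype l] {R : Type*} [CommRing R]

theorem mul_transpose_mulVec_of_mem_range {O : Matrix m k R} (hO : Oᵀ * O = 1) {v : m → R}
    (hv : v ∈ LinearMap.range O.mulVecLin) : (O * Oᵀ) *ᵥ v = v := by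
  obtain ⟨y, rfl⟩ := hv
  rw [mulVecLin_apply, mulVec_mulVec, Matrix.mul_assoc, hO, Matrix.mul_one]

theorem mul_transpose_mul_of_range_le [DecidableEq l] {O : Matrix m k R} (hO : Oᵀ * O = 1)
    {B : Matrix m l R} (hB : LinearMap.range B.mulVecLin ≤ LinearMap.range O.mulVecLin) :
    O * (Oᵀ * B) = B := by
  refine ext_of_mulVec_single fun j => ?_
  rw [← Matrix.mul_assoc, ← mulVec_mulVec]
  exact mul_transpose_mulVec_of_mem_range hO (hB (LinearMap.mem_range_self _ _))

theorem det_transpose_mul_mul (C M : Matrix k k R) :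
    (Cᵀ * M * C).det = C.det ^ 2 * M.det := by
  rw [det_mul, det_mul, det_transpose]; ring

end Matrix

theorem Real.sqrt_det_transpose_mul_mul {k : Type*} [Fintype k] [DecidableEq k]
    (C M : Matrix k k ℝ) : √(Cᵀ * M * C).det = |C.det| * √M.det := by
  rw [Matrix.det_transpose_mul_mul, Real.sqrt_mul (sq_nonneg _), Real.sqrt_sq_eq_abs]

theorem stmt8_general {n d : ℕ} (B : Matrix (Fin n) (Fin d) ℝ)
    (A : Matrix (Fin n) (Fin n) ℝ)
    (O : Matrix (Fin n) (Fin d) ℝ) (hO : Oᵀ * O = 1)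
    (hrange : LinearMap.range O.mulVecLin = LinearMap.range B.mulVecLin) :
    Real.sqrt ((A * B)ᵀ * (A * B)).det =
      Real.sqrt (Oᵀ * (Aᵀ * A) * O).det * Real.sqrt (Bᵀ * B).det := by
  set C := Oᵀ * B
  have hOC : B = O * C := (mul_transpose_mul_of_range_le hO hrange.ge).symm
  have hAB : (A * B)ᵀ * (A * B) = Cᵀ * (Oᵀ * (Aᵀ * A) * O) * C := by
    rw [hOC]; simp only [transpose_mul, Matrix.mul_assoc]
  have hBB : Bᵀ * B = Cᵀ * 1 * C := by
    simp only [hOC, transpose_mul, Matrix.mul_assoc, Matrix.mul_one]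
    rw [← Matrix.mul_assoc Oᵀ, hO, Matrix.one_mul]
  rw [hAB, hBB, Real.sqrt_det_transpose_mul_mul, Real.sqrt_det_transpose_mul_mul, det_one,
    Real.sqrt_one, mul_one, mul_comm]

/-- For a lattice `Λ = B·ℤᵈ` spanning the subspace `W` (with orthonormal basis matrix `O`),
and `A` invertible, `det(AΛ) = det_W(AᵀA)^{1/2}·det(Λ)`. -/
theorem stmt8 {n d : ℕ} (B : Matrix (Fin n) (Fin d) ℝ)
    (hB : LinearIndependent ℝ fun j : Fin d => fun i => B i j)
    (A : Matrix (Fin n) (Fin n) ℝ) (hA : IsUnit A.det)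
    (O : Matrix (Fin n) (Fin d) ℝ) (hO : Oᵀ * O = 1)
    (hrange : LinearMap.range O.mulVecLin = LinearMap.range B.mulVecLin) :
    Real.sqrt ((A * B)ᵀ * (A * B)).det =
      Real.sqrt (Oᵀ * (Aᵀ * A) * O).det * Real.sqrt (Bᵀ * B).det :=
  stmt8_general B A O hO hrange
end

section
/- Let A ⪰ 0 be an n×n positive semidefinite matrix with range W of dimension d. Then the maximum of det_W(X)·det_W(Y) over pairs of positive semidefinite matrices X, Y with X + Y = A equals det_W(A/2)², where det_W(M) = det(O_Wᵀ M O_W) for O_W an orthonormal basis matrix of W. -/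
/-!
Compression by `O` preserves positive semidefiniteness, so it suffices that
`det B * det C ≤ det ((B + C) / 2) ^ 2` for PSD `B`, `C`. If `B + C` is singular then so is `B`.
Otherwise write `B + C = Tᴴ T` and conjugate by `T⁻¹` to reach `B + C = 1`; then `B` and `1 - B`
have eigenvalues `λᵢ` and `1 - λᵢ` in `[0, 1]`, and `λ (1 - λ) ≤ 1 / 4`.
-/

open Matrix
open scoped MatrixOrder ComplexOrder

namespace Matrix

variable {ι : Type*} [Fintype ι] [DecidableEq ι]

theorem det_one_sub_eq_prod_eigenvalues {B : Matrix ι ι ℝ} (hB : B.IsHermitian) :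
    (1 - B).det = ∏ i, (1 - hB.eigenvalues i) := by
  rw [← map_one (scalar ι), ← eval_charpoly, hB.charpoly_eq, Polynomial.eval_prod]
  simp

theorem det_mul_det_le_of_add_eq_one {B C : Matrix ι ι ℝ} (hB : B.PosSemidef)
    (hC : C.PosSemidef) (hBC : B + C = 1) :
    B.det * C.det ≤ (1 / 4) ^ Fintype.card ι := by
  obtain rfl : C = 1 - B := eq_sub_of_add_eq' hBC
  have hH := hB.isHermitian
  have le_one : ∀ i, hH.eigenvalues i ≤ 1 := fun i ↦
    (CFC.le_one_iff B).mp (le_iff.mpr hC) _ (hH.eigenvalues_mem_spectrum_real i)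
  rw [hH.det_eq_prod_eigenvalues, det_one_sub_eq_prod_eigenvalues hH, ← Finset.prod_mul_distrib,
    ← Finset.card_univ, ← Finset.prod_const]
  simp only [RCLike.ofReal_real_eq_id, id]
  refine Finset.prod_le_prod (fun i _ ↦ ?_) (fun i _ ↦ ?_)
  · exact mul_nonneg (hB.eigenvalues_nonneg i) (sub_nonneg.mpr (le_one i))
  · nlinarith [sq_nonneg (hH.eigenvalues i - 1 / 2)]

variable {𝕜 : Type*} [RCLike 𝕜]

theorem PosSemidef.det_eq_zero_of_det_add_eq_zero {B C : Matrix ι ι 𝕜} (hB : B.PosSemidef)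
    (hC : C.PosSemidef) (h : (B + C).det = 0) : B.det = 0 := by
  obtain ⟨x, hx, hBCx⟩ := exists_mulVec_eq_zero_iff.mpr h
  have hsum : star x ⬝ᵥ B *ᵥ x + star x ⬝ᵥ C *ᵥ x = 0 := by
    rw [← dotProduct_add, ← add_mulVec, hBCx, dotProduct_zero]
  have hBx : star x ⬝ᵥ B *ᵥ x = 0 :=
    ((add_eq_zero_iff_of_nonneg (hB.dotProduct_mulVec_nonneg x)
      (hC.dotProduct_mulVec_nonneg x)).mp hsum).1
  exact exists_mulVec_eq_zero_iff.mp ⟨x, hx, (hB.dotProduct_mulVec_zero_iff x).mp hBx⟩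

theorem det_conjTranspose_mul_mul_same {B : Matrix ι ι ℝ} (U : Matrix ι ι ℝ) :
    (Uᴴ * B * U).det = U.det ^ 2 * B.det := by
  rw [det_mul, det_mul, det_conjTranspose, star_trivial]
  ring

theorem PosSemidef.det_mul_det_le_det_half_add_sq {B C : Matrix ι ι ℝ} (hB : B.PosSemidef)
    (hC : C.PosSemidef) : B.det * C.det ≤ ((1 / 2 : ℝ) • (B + C)).det ^ 2 := by
  by_cases hdet : (B + C).det = 0
  · rw [hB.det_eq_zero_of_det_add_eq_zero hC hdet, zero_mul]
    positivity
  obtain ⟨T, hT⟩ := CStarAlgebra.nonneg_iff_eq_star_mul_self.mp (hB.add hC).nonneg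
  have hBC : (B + C).det = T.det ^ 2 := by
    rw [hT, star_eq_conjTranspose, det_mul, det_conjTranspose, star_trivial, sq]
  have hTdet : IsUnit T.det := isUnit_iff_ne_zero.mpr fun h ↦ hdet (by simp [hBC, h])
  set U := T⁻¹
  have hnormalized : Uᴴ * B * U + Uᴴ * C * U = 1 := by
    rw [← Matrix.add_mul, ← Matrix.mul_add, hT, star_eq_conjTranspose, ← Matrix.mul_assoc,
      Matrix.mul_assoc (Uᴴ * Tᴴ), ← conjTranspose_mul, mul_nonsing_inv _ hTdet,
      conjTranspose_one, Matrix.one_mul]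
  have key := det_mul_det_le_of_add_eq_one (hB.conjTranspose_mul_mul_same U)
    (hC.conjTranspose_mul_mul_same U) hnormalized
  have hUT : U.det * T.det = 1 := by rw [← det_mul, nonsing_inv_mul _ hTdet, det_one]
  rw [det_conjTranspose_mul_mul_same, det_conjTranspose_mul_mul_same] at key
  calc B.det * C.det = (U.det * T.det) ^ 4 * (B.det * C.det) := by rw [hUT]; ring
    _ = T.det ^ 4 * (U.det ^ 2 * B.det * (U.det ^ 2 * C.det)) := by ring
    _ ≤ T.det ^ 4 * (1 / 4) ^ Fintype.card ι := by gcongr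
    _ = ((1 / 2 : ℝ) • (B + C)).det ^ 2 := by
        rw [det_smul, hBC, show (1 / 4 : ℝ) = (1 / 2) ^ 2 by norm_num, ← pow_mul, mul_comm 2,
          pow_mul]
        ring

end Matrix

theorem stmt9_general {n d : ℕ} (A : Matrix (Fin n) (Fin n) ℝ) (hA : A.PosSemidef)
    (O : Matrix (Fin n) (Fin d) ℝ) :
    IsGreatest {v : ℝ | ∃ X Y : Matrix (Fin n) (Fin n) ℝ,
        X.PosSemidef ∧ Y.PosSemidef ∧ X + Y = A ∧
        v = (Oᵀ * X * O).det * (Oᵀ * Y * O).det}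
      ((Oᵀ * ((1 / 2 : ℝ) • A) * O).det ^ 2) := by
  have compress {X : Matrix (Fin n) (Fin n) ℝ} (hX : X.PosSemidef) : (Oᵀ * X * O).PosSemidef := by
    simpa using hX.conjTranspose_mul_mul_same O
  have hhalf : ((1 / 2 : ℝ) • A).PosSemidef := hA.smul (by norm_num)
  refine ⟨⟨_, _, hhalf, hhalf, by rw [← add_smul]; norm_num, sq _⟩, ?_⟩
  rintro v ⟨X, Y, hX, hY, rfl, rfl⟩
  simpa only [Matrix.mul_add, Matrix.add_mul, Matrix.mul_smul, Matrix.smul_mul] using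
    (compress hX).det_mul_det_le_det_half_add_sq (compress hY)

/-- The maximum of `det_W(X)·det_W(Y)` over PSD `X, Y` with `X + Y = A`
(`A ⪰ 0` with range `W`, `O` an orthonormal basis matrix of `W`)
is `det_W(A/2)²`. -/
theorem stmt9 {n d : ℕ} (A : Matrix (Fin n) (Fin n) ℝ) (hA : A.PosSemidef)
    (O : Matrix (Fin n) (Fin d) ℝ) (hO : Oᵀ * O = 1)
    (hrange : LinearMap.range O.mulVecLin = LinearMap.range A.mulVecLin) :
    IsGreatest {v : ℝ | ∃ X Y : Matrix (Fin n) (Fin n) ℝ,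
        X.PosSemidef ∧ Y.PosSemidef ∧ X + Y = A ∧
        v = (Oᵀ * X * O).det * (Oᵀ * Y * O).det}
      ((Oᵀ * ((1 / 2 : ℝ) • A) * O).det ^ 2) :=
  stmt9_general A hA O
end

section
/- For an n-dimensional lattice Λ ⊂ ℝⁿ, define μ̄(Λ)² = E_{x ← ℝⁿ/Λ}[dist(x,Λ)²] (the expectation over a uniform point of the torus). Then μ̄(Λ) ≤ μ(Λ) ≤ √8 · μ̄(Λ), where μ(Λ) is the covering radius. -/
/-!
The lower bound holds because a mean never exceeds a maximum. For the upper bound, `dist(·, Λ)`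
is subadditive, even and `Λ`-periodic, so `dist(x, Λ) ≤ dist(x + y, Λ) + dist(y, Λ)` for all `y`.
Picking `y` in a fundamental domain `F` where the right-hand side is at most its mean, and using
that `x + F` is again a fundamental domain, gives `dist(x, Λ) ≤ 2 𝔼[dist(·, Λ)] ≤ 2 μ̄(Λ)` by
Jensen. Hence `μ(Λ) ≤ 2 μ̄(Λ) ≤ √8 μ̄(Λ)`.
-/

open MeasureTheory Real Matrix Set

/-- The average squared distance of a uniform torus point to the lattice:
`μ̄(Λ)² = E_{x ← ℝⁿ/Λ}[dist(x,Λ)²]`. -/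
noncomputable def muBarSq {n : ℕ} (B : Matrix (Fin n) (Fin n) ℝ) : ℝ :=
  (∫ x in fundDom B, distLat B x ^ 2) / |B.det|

lemma sq_setAverage_le_setAverage_sq {α : Type*} [MeasurableSpace α] {μ : Measure α} {s : Set α}
    {f : α → ℝ} (hμ : μ s ≠ 0) (hμ₁ : μ s ≠ ⊤) (hf : IntegrableOn f s μ)
    (hf2 : IntegrableOn (fun x => f x ^ 2) s μ) :
    (⨍ x in s, f x ∂μ) ^ 2 ≤ ⨍ x in s, f x ^ 2 ∂μ :=
  (even_two.convexOn_pow (𝕜 := ℝ)).map_set_average_le (continuous_pow 2).continuousOn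
    isClosed_univ hμ hμ₁ (ae_of_all _ fun _ => mem_univ _) hf hf2

namespace LatticeDistance

variable {n : ℕ}

lemma enorm_eq_norm_toLp (x : Fin n → ℝ) : _root_.enorm x = ‖WithLp.toLp 2 x‖ := by
  simp [_root_.enorm, EuclideanSpace.norm_eq]

lemma enorm_nonneg (x : Fin n → ℝ) : 0 ≤ _root_.enorm x := Real.sqrt_nonneg _

lemma enorm_add_le (x y : Fin n → ℝ) :
    _root_.enorm (x + y) ≤ _root_.enorm x + _root_.enorm y := by
  simpa only [enorm_eq_norm_toLp, WithLp.toLp_add] using norm_add_le _ _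

lemma enorm_neg (x : Fin n → ℝ) : _root_.enorm (-x) = _root_.enorm x := by
  simp only [enorm_eq_norm_toLp, WithLp.toLp_neg, norm_neg]

variable (B : Matrix (Fin n) (Fin n) ℝ)

lemma latPt_add (z w : Fin n → ℤ) : latPt B (z + w) = latPt B z + latPt B w := by
  simp only [latPt, Pi.add_apply, Int.cast_add, ← Matrix.mulVec_add]; rfl

lemma latPt_neg (z : Fin n → ℤ) : latPt B (-z) = -latPt B z := by
  simp only [latPt, Pi.neg_apply, Int.cast_neg, ← Matrix.mulVec_neg]; rfl

lemma distLat_nonneg (x : Fin n → ℝ) : 0 ≤ distLat B x :=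
  le_ciInf fun _ => enorm_nonneg _

lemma distLat_le (x : Fin n → ℝ) (z : Fin n → ℤ) :
    distLat B x ≤ _root_.enorm (x - latPt B z) :=
  ciInf_le ⟨0, by rintro r ⟨z, rfl⟩; exact enorm_nonneg _⟩ z

lemma distLat_le_add_enorm (x y : Fin n → ℝ) :
    distLat B x ≤ distLat B y + _root_.enorm (x - y) :=
  le_ciInf_add fun z =>
    calc distLat B x ≤ _root_.enorm ((y - latPt B z) + (x - y)) := by
          simpa using distLat_le B x z
      _ ≤ _ := enorm_add_le _ _

lemma continuous_distLat : Continuous (distLat B) := by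
  have : LipschitzWith 1 fun x : EuclideanSpace ℝ (Fin n) => distLat B x.ofLp :=
    LipschitzWith.of_le_add fun x y => by
      simpa [enorm_eq_norm_toLp, dist_eq_norm] using distLat_le_add_enorm B x.ofLp y.ofLp
  exact this.continuous.comp (PiLp.continuous_toLp 2 _)

lemma distLat_add_le (x y : Fin n → ℝ) : distLat B (x + y) ≤ distLat B x + distLat B y :=
  le_ciInf_add_ciInf fun z w =>
    calc distLat B (x + y) ≤ _root_.enorm ((x - latPt B z) + (y - latPt B w)) := by
          simpa [latPt_add, sub_add_sub_comm] using distLat_le B (x + y) (z + w)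
      _ ≤ _ := enorm_add_le _ _

lemma distLat_neg_le (x : Fin n → ℝ) : distLat B (-x) ≤ distLat B x :=
  le_ciInf fun z => by
    simpa [latPt_neg, ← enorm_neg (x - _), neg_add_eq_sub] using distLat_le B (-x) (-z)

lemma distLat_neg (x : Fin n → ℝ) : distLat B (-x) = distLat B x :=
  le_antisymm (distLat_neg_le B x) (by simpa using distLat_neg_le B (-x))

lemma distLat_add_latPt (x : Fin n → ℝ) (z : Fin n → ℤ) :
    distLat B (x + latPt B z) = distLat B x := by
  have key (y : Fin n → ℝ) (w : Fin n → ℤ) : distLat B (y + latPt B w) ≤ distLat B y :=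
    le_ciInf fun v => by simpa [latPt_add] using distLat_le B (y + latPt B w) (v + w)
  refine le_antisymm (key x z) ?_
  simpa [latPt_neg] using key (x + latPt B z) (-z)

variable {B}

noncomputable def colBasis (hB : IsUnit B.det) : Module.Basis (Fin n) ℝ (Fin n → ℝ) :=
  (Pi.basisFun ℝ (Fin n)).map (Matrix.toLinearEquiv' B (B.invertibleOfIsUnitDet hB))

lemma colBasis_repr_mulVec (hB : IsUnit B.det) (v : Fin n → ℝ) :
    (colBasis hB).repr (B *ᵥ v) = v :=
  (Matrix.toLinearEquiv' B (B.invertibleOfIsUnitDet hB)).symm_apply_apply v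

lemma mulVec_colBasis_repr (hB : IsUnit B.det) (x : Fin n → ℝ) :
    B *ᵥ (colBasis hB).repr x = x :=
  (Matrix.toLinearEquiv' B (B.invertibleOfIsUnitDet hB)).apply_symm_apply x

lemma mem_span_colBasis_iff (hB : IsUnit B.det) {v : Fin n → ℝ} :
    v ∈ Submodule.span ℤ (range (colBasis hB)) ↔ ∃ z, latPt B z = v := by
  rw [Module.Basis.mem_span_iff_repr_mem]
  constructor
  · intro h
    choose z hz using h
    refine ⟨z, ?_⟩
    simp only [eq_intCast] at hz
    rw [latPt, funext hz]
    exact mulVec_colBasis_repr hB v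
  · rintro ⟨z, rfl⟩ i
    exact ⟨z i, by rw [latPt, colBasis_repr_mulVec, eq_intCast]⟩

lemma fundDom_eq_fundamentalDomain (hB : IsUnit B.det) :
    fundDom B = ZSpan.fundamentalDomain (colBasis hB) := by
  rw [colBasis, ← ZSpan.map_fundamentalDomain, ZSpan.fundamentalDomain_pi_basisFun]
  rfl

lemma volume_fundDom : volume (fundDom B) = ENNReal.ofReal |B.det| := by
  have hcube : volume (univ.pi fun _ : Fin n => Ico (0 : ℝ) 1) = 1 := by
    simp [volume_pi_pi, Real.volume_Ico]
  have h := Measure.addHaar_image_linearMap volume (Matrix.toLin' B)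
    (univ.pi fun _ : Fin n => Ico (0 : ℝ) 1)
  rwa [LinearMap.det_toLin', hcube, mul_one] at h

lemma isBounded_fundDom : Bornology.IsBounded (fundDom B) :=
  ((isCompact_univ_pi fun _ => isCompact_Icc).image
    (Matrix.toLin' B).continuous_of_finiteDimensional).isBounded.subset
    (image_mono (pi_mono fun _ _ => Ico_subset_Icc_self))

lemma integrableOn_fundDom {f : (Fin n → ℝ) → ℝ} (hf : Continuous f) :
    IntegrableOn f (fundDom B) :=
  (hf.continuousOn.integrableOn_compact isBounded_fundDom.isCompact_closure).mono_set
    subset_closure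

lemma muBarSq_eq_setAverage : muBarSq B = ⨍ x in fundDom B, distLat B x ^ 2 := by
  rw [muBarSq, setAverage_eq, measureReal_def, volume_fundDom,
    ENNReal.toReal_ofReal (abs_nonneg _), smul_eq_mul, div_eq_inv_mul]

lemma distLat_add_of_mem_span (hB : IsUnit B.det) (x : Fin n → ℝ) {v : Fin n → ℝ}
    (hv : v ∈ Submodule.span ℤ (range (colBasis hB))) : distLat B (x + v) = distLat B x := by
  obtain ⟨z, rfl⟩ := (mem_span_colBasis_iff hB).mp hv
  exact distLat_add_latPt B x z

lemma bddAbove_range_distLat (hB : IsUnit B.det) : BddAbove (range (distLat B)) := by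
  refine ((isBounded_fundDom (B := B)).isCompact_closure.bddAbove_image
    (continuous_distLat B).continuousOn).mono ?_
  rintro _ ⟨x, rfl⟩
  refine ⟨ZSpan.fract (colBasis hB) x, subset_closure ?_, ?_⟩
  · rw [fundDom_eq_fundamentalDomain hB]
    exact ZSpan.fract_mem_fundamentalDomain _ x
  · rw [ZSpan.fract_apply, sub_eq_add_neg]
    exact distLat_add_of_mem_span hB x (neg_mem (ZSpan.floor _ x).2)

lemma setIntegral_distLat_add (hB : IsUnit B.det) (x : Fin n → ℝ) :
    ∫ y in fundDom B, distLat B (x + y) = ∫ y in fundDom B, distLat B y := by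
  have : Countable (Submodule.span ℤ (range (colBasis hB))).toAddSubgroup :=
    inferInstanceAs (Countable (Submodule.span ℤ _))
  have hF := fundDom_eq_fundamentalDomain hB ▸ ZSpan.isAddFundamentalDomain' (colBasis hB) volume
  rw [← (measurePreserving_add_left volume x).setIntegral_image_emb
    (measurableEmbedding_addLeft x)]
  refine (hF.vadd_of_comm x).setIntegral_eq hF fun v y => ?_
  rw [AddSubgroup.vadd_def, vadd_eq_add, add_comm]
  exact distLat_add_of_mem_span hB y v.2

lemma volume_fundDom_ne_zero (hB : IsUnit B.det) : volume (fundDom B) ≠ 0 := by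
  simpa [volume_fundDom] using hB.ne_zero

lemma volume_fundDom_ne_top : volume (fundDom B) ≠ ⊤ := by
  simp [volume_fundDom]

lemma distLat_le_two_mul_setAverage (hB : IsUnit B.det) (x : Fin n → ℝ) :
    distLat B x ≤ 2 * ⨍ y in fundDom B, distLat B y := by
  have hshift : Continuous fun y => distLat B (x + y) :=
    (continuous_distLat B).comp (continuous_const_add x)
  obtain ⟨y, -, hy⟩ := exists_le_setAverage (volume_fundDom_ne_zero hB) volume_fundDom_ne_top
    (integrableOn_fundDom (hshift.add (continuous_distLat B)))
  calc distLat B x = distLat B ((x + y) + -y) := by rw [add_neg_cancel_right]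
    _ ≤ distLat B (x + y) + distLat B y := by
        simpa only [distLat_neg] using distLat_add_le B (x + y) (-y)
    _ ≤ ⨍ y in fundDom B, (distLat B (x + y) + distLat B y) := hy
    _ = 2 * ⨍ y in fundDom B, distLat B y := by
        rw [setAverage_eq, setAverage_eq, integral_add (integrableOn_fundDom hshift)
          (integrableOn_fundDom (continuous_distLat B)), setIntegral_distLat_add hB x, smul_eq_mul,
          smul_eq_mul]
        ring

lemma sqrt_muBarSq_le_covRad (hB : IsUnit B.det) : √(muBarSq B) ≤ covRad B := by
  have hsq : Continuous fun x => distLat B x ^ 2 := (continuous_distLat B).pow 2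
  obtain ⟨x, -, hx⟩ := exists_setAverage_le (volume_fundDom_ne_zero hB) volume_fundDom_ne_top
    (integrableOn_fundDom hsq)
  calc √(muBarSq B) ≤ √(distLat B x ^ 2) := by rw [muBarSq_eq_setAverage]; gcongr
    _ = distLat B x := Real.sqrt_sq (distLat_nonneg B x)
    _ ≤ covRad B := le_ciSup (bddAbove_range_distLat hB) x

lemma covRad_le_two_mul_sqrt_muBarSq (hB : IsUnit B.det) : covRad B ≤ 2 * √(muBarSq B) := by
  refine ciSup_le fun x => (distLat_le_two_mul_setAverage hB x).trans ?_
  gcongr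
  rw [muBarSq_eq_setAverage]
  exact Real.le_sqrt_of_sq_le <| sq_setAverage_le_setAverage_sq (volume_fundDom_ne_zero hB)
    volume_fundDom_ne_top (integrableOn_fundDom (continuous_distLat B))
    (integrableOn_fundDom ((continuous_distLat B).pow 2))

end LatticeDistance

/-- `μ̄(Λ) ≤ μ(Λ) ≤ √8 · μ̄(Λ)`. -/
theorem stmt15 {n : ℕ} (B : Matrix (Fin n) (Fin n) ℝ) (hB : IsUnit B.det) :
    Real.sqrt (muBarSq B) ≤ covRad B ∧
      covRad B ≤ Real.sqrt 8 * Real.sqrt (muBarSq B) := by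
  refine ⟨LatticeDistance.sqrt_muBarSq_le_covRad hB,
    (LatticeDistance.covRad_le_two_mul_sqrt_muBarSq hB).trans ?_⟩
  gcongr
  exact Real.le_sqrt_of_sq_le (by norm_num)
end
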